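/- arXiv:1610.01257 — 2 statements merged into one kernel-verified Lean document; each statement's English description precedes it below -/
import Mathlib

section
/- Let N ∈ ℕ, set ℓ := N/2, and let ν > 0. Then for all k, j ∈ {0,…,N}: 2^{−N} C(N,k) Σ_{i=0}^{N} C(N,i)(ν+N−i)(ν+i) K_i(k) K_j(i) equals −(k+1)(k+2)/4 if j = k+2; equals ℓ(ℓ−1/2) + k(k/2−ℓ) + ν(ν+N) if j = k; equals −(N−k+1)(N−k+2)/4 if j = k−2; and equals 0 otherwise. -/
/-!
Model the Krawtchouk polynomials on the hypercube of subsets of `Fin N`: with the characters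
`walsh S T = (-1)^|S ∩ T|`, the sphere sum `F_n(S) = ∑_{|T| = n} walsh S T` equals
`C(N,n) K_n(|S|)`. Together with the duality `K_i(k) = K_k(i)`, the sum to be computed becomes
`∑_S w(|S|) F_k(S) F_j(S)` with `w(x) = (ν + N - x)(ν + x) = ν(ν + N) + N²/4 - (N - 2x)²/4`.
Orthogonality of the characters gives `∑_S F_k F_j = 2^N C(N,k) δ_kj`. Since
`N - 2|S| = ∑_e walsh S {e}`, the `(N - 2x)²` part counts the ways two one-element flips carry a
`k`-set to a `j`-set; two flips change the size by `-2`, `0` or `2`, which is why the matrix is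
pentadiagonal.
-/

open Polynomial

/-- Krawtchouk polynomial `K_n(x)` with parameter `p = 1/2` and `N` trials. -/
noncomputable def kraw (N n : ℕ) (x : ℝ) : ℝ :=
  ∑ s ∈ Finset.range (n + 1),
    ((ascPochhammer ℝ s).eval (-(n : ℝ)) * (ascPochhammer ℝ s).eval (-x)
        / ((ascPochhammer ℝ s).eval (-(N : ℝ)) * (Nat.factorial s : ℝ))) * 2 ^ s

namespace Krawtchouk

open Finset
open scoped symmDiff

lemma ascPochhammer_eval_neg_natCast (s m : ℕ) :
    (ascPochhammer ℝ s).eval (-(m : ℝ)) = (-1) ^ s * s.factorial * m.choose s := by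
  rw [ascPochhammer_eval_neg_eq_descPochhammer, descPochhammer_eval_eq_descFactorial,
    Nat.descFactorial_eq_factorial_mul_choose]
  push_cast
  ring

lemma kraw_natCast {N n : ℕ} (hn : n ≤ N) (x : ℕ) :
    kraw N n x = ∑ s ∈ range (N + 1), (-2 : ℝ) ^ s * n.choose s * x.choose s / N.choose s := by
  rw [kraw, ← sum_subset (range_subset_range.2 (by omega : n + 1 ≤ N + 1))]
  · refine sum_congr rfl fun s hs => ?_
    have hNs : (N.choose s : ℝ) ≠ 0 := by
      exact_mod_cast (Nat.choose_pos ((Nat.lt_succ_iff.1 (mem_range.1 hs)).trans hn)).ne'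
    simp only [ascPochhammer_eval_neg_natCast]
    field_simp
    rw [show (-2 : ℝ) ^ s = (-1) ^ s * 2 ^ s by rw [← mul_pow]; norm_num]
    ring
  · intro s _ hsn
    rw [Nat.choose_eq_zero_of_lt (by simpa using hsn)]
    simp

lemma kraw_symm {N n m : ℕ} (hn : n ≤ N) (hm : m ≤ N) : kraw N n m = kraw N m n := by
  rw [kraw_natCast hn, kraw_natCast hm]
  exact sum_congr rfl fun s _ => by ring

lemma choose_mul_choose_eq {N n s : ℕ} (hn : n ≤ N) (hs : s ≤ N) :
    N.choose n * n.choose s = N.choose s * (N - s).choose (N - n) := by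
  rcases le_or_gt s n with hsn | hsn
  · rw [Nat.choose_mul hsn, Nat.choose_symm_of_eq_add (show N - s = (N - n) + (n - s) by omega)]
  · rw [Nat.choose_eq_zero_of_lt hsn, Nat.choose_eq_zero_of_lt (by omega : N - s < N - n),
      mul_zero, mul_zero]

lemma choose_mul_kraw {N n : ℕ} (hn : n ≤ N) (x : ℕ) :
    N.choose n * kraw N n x =
      ∑ s ∈ range (N + 1), x.choose s * (-2 : ℝ) ^ s * (N - s).choose (N - n) := by
  rw [kraw_natCast hn, mul_sum]
  refine sum_congr rfl fun s hs => ?_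
  have hsN : s ≤ N := Nat.lt_succ_iff.1 (mem_range.1 hs)
  have hNs : (N.choose s : ℝ) ≠ 0 := by exact_mod_cast (Nat.choose_pos hsN).ne'
  have key : (N.choose n : ℝ) * n.choose s = N.choose s * (N - s).choose (N - n) := by
    exact_mod_cast choose_mul_choose_eq hn hsN
  field_simp
  linear_combination (x.choose s : ℝ) * key

lemma choose_add_two_mul {N k : ℕ} (h : k + 2 ≤ N) :
    (N.choose (k + 2) : ℝ) * ((k + 1) * (k + 2)) = N.choose k * ((N - k) * (N - k - 1)) := by
  have h1 : (N.choose (k + 1) : ℝ) * (k + 1) = N.choose k * ((N - k : ℕ) : ℝ) := by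
    exact_mod_cast Nat.choose_succ_right_eq N k
  have h2 : (N.choose (k + 2) : ℝ) * (k + 2) = N.choose (k + 1) * ((N - (k + 1) : ℕ) : ℝ) := by
    exact_mod_cast Nat.choose_succ_right_eq N (k + 1)
  rw [Nat.cast_sub (by omega)] at h1 h2
  push_cast at h2
  linear_combination (k + 1 : ℝ) * h2 + (N - k - 1 : ℝ) * h1

variable {N : ℕ}

lemma sum_range_choose_mul (g : ℕ → ℝ) :
    ∑ i ∈ range (N + 1), N.choose i * g i = ∑ S : Finset (Fin N), g #S := by
  have h := sum_powerset_apply_card g (x := (univ : Finset (Fin N)))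
  rw [powerset_univ, card_univ, Fintype.card_fin] at h
  simp only [h, nsmul_eq_mul]

lemma sum_ite_mem (A : Finset (Fin N)) (a b : ℝ) :
    ∑ e, (if e ∈ A then a else b) = #A * a + (N - #A) * b := by
  rw [← sum_add_sum_compl A, sum_congr rfl fun e he => if_pos he,
    sum_congr rfl fun e he => if_neg (mem_compl.1 he), sum_const, sum_const, card_compl,
    Fintype.card_fin, nsmul_eq_mul, nsmul_eq_mul, Nat.cast_sub (by simpa using card_le_univ A)]

lemma card_symmDiff_singleton (A : Finset (Fin N)) (e : Fin N) :
    #(A ∆ {e}) = if e ∈ A then #A - 1 else #A + 1 := by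
  split_ifs with he
  · rw [← card_erase_of_mem he]
    congr 1
    ext x
    by_cases hx : x = e <;> simp [mem_symmDiff, hx, he]
  · rw [← card_insert_of_notMem he]
    congr 1
    ext x
    by_cases hx : x = e <;> simp [mem_symmDiff, hx, he]

lemma sum_card_symmDiff_singleton (A : Finset (Fin N)) (g : ℕ → ℝ) :
    ∑ e, g #(A ∆ {e}) = #A * g (#A - 1) + (N - #A) * g (#A + 1) := by
  simp only [card_symmDiff_singleton, apply_ite g, sum_ite_mem]

lemma sum_sum_card_symmDiff_singleton (A : Finset (Fin N)) (g : ℕ → ℝ) :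
    ∑ e, ∑ f, g #(A ∆ {e} ∆ {f}) =
      #A * (#A - 1) * g (#A - 2) + (2 * #A * (N - #A) + N) * g #A +
        (N - #A) * (N - #A - 1) * g (#A + 2) := by
  simp only [sum_card_symmDiff_singleton (A ∆ {_}) g]
  rw [sum_card_symmDiff_singleton A (fun m => m * g (m - 1) + (N - m) * g (m + 1))]
  rcases Nat.eq_zero_or_pos #A with h | h
  · rw [h]
    push_cast
    ring
  · rw [show #A - 1 - 1 = #A - 2 by omega, Nat.sub_add_cancel h, Nat.cast_sub h]
    push_cast
    ring

/-- Complementation. Written with `N - n` rather than `n - #A`, the count is also right (zero)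
when `n < #A`. -/
lemma card_filter_superset_powersetCard {n : ℕ} (hn : n ≤ N) (A : Finset (Fin N)) :
    #{T ∈ powersetCard n univ | A ⊆ T} = (N - #A).choose (N - n) := by
  have hc : N - #A = #Aᶜ := by rw [card_compl, Fintype.card_fin]
  rw [hc, ← card_powersetCard]
  refine card_nbij' compl compl (fun T hT => ?_) (fun U hU => ?_) (fun T _ => compl_compl T)
    (fun U _ => compl_compl U)
  · simp only [coe_filter, mem_powersetCard, Set.mem_ofPred_eq, mem_coe] at hT ⊢
    exact ⟨compl_subset_compl.2 hT.2, by rw [card_compl, hT.1.2, Fintype.card_fin]⟩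
  · simp only [coe_filter, mem_powersetCard, Set.mem_ofPred_eq, mem_coe] at hU ⊢
    refine ⟨⟨subset_univ _, ?_⟩, subset_compl_comm.1 hU.1⟩
    rw [card_compl, hU.2, Fintype.card_fin]
    omega

noncomputable def walsh (S T : Finset (Fin N)) : ℝ := (-1) ^ #(S ∩ T)

lemma walsh_comm (S T : Finset (Fin N)) : walsh S T = walsh T S := by rw [walsh, walsh, inter_comm]

lemma walsh_eq_prod (S T : Finset (Fin N)) : walsh S T = ∏ i ∈ S, if i ∈ T then -1 else 1 := by
  rw [prod_ite, prod_const_one, mul_one, prod_const, filter_mem_eq_inter, walsh]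

lemma walsh_singleton (S : Finset (Fin N)) (e : Fin N) : walsh S {e} = if e ∈ S then -1 else 1 := by
  rw [walsh_comm, walsh_eq_prod, prod_singleton]

lemma walsh_mul_walsh (S T U : Finset (Fin N)) : walsh S T * walsh S U = walsh S (T ∆ U) := by
  simp only [walsh_eq_prod, ← prod_mul_distrib, mem_symmDiff]
  refine prod_congr rfl fun i _ => ?_
  by_cases hT : i ∈ T <;> by_cases hU : i ∈ U <;> simp [hT, hU]

lemma walsh_eq_sum_powerset (S T : Finset (Fin N)) :
    walsh S T = ∑ A ∈ (S ∩ T).powerset, (-2 : ℝ) ^ #A := by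
  have h := sum_pow_mul_eq_add_pow (-2 : ℝ) 1 (S ∩ T)
  rw [show (-2 : ℝ) + 1 = -1 by norm_num] at h
  simp only [one_pow, mul_one] at h
  rw [walsh, ← h]

lemma sum_walsh (T : Finset (Fin N)) :
    ∑ S, walsh S T = if T = ∅ then (2 : ℝ) ^ N else 0 := by
  split_ifs with hT
  · simp [hT, walsh]
  · obtain ⟨t, ht⟩ := nonempty_iff_ne_empty.2 hT
    have hflip (S : Finset (Fin N)) : walsh (S ∆ {t}) T = -walsh S T := by
      rw [walsh_comm, ← walsh_mul_walsh, walsh_comm T S, walsh_singleton, if_pos ht, mul_neg_one]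
    exact sum_involution (fun S _ => S ∆ {t}) (fun S _ => by rw [hflip]; ring)
      (fun S _ _ => by simp) (fun _ _ => mem_univ _)
      (fun S _ => symmDiff_symmDiff_cancel_right _ _)

lemma sum_walsh_singleton (S : Finset (Fin N)) : ∑ e, walsh S {e} = (N : ℝ) - 2 * #S := by
  simp only [walsh_singleton, sum_ite_mem]
  ring

noncomputable def sphereSum (n : ℕ) (S : Finset (Fin N)) : ℝ := ∑ T ∈ powersetCard n univ, walsh S T

lemma sphereSum_eq_sum {n : ℕ} (hn : n ≤ N) (S : Finset (Fin N)) :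
    sphereSum n S = ∑ s ∈ range (N + 1), (#S).choose s * (-2 : ℝ) ^ s * (N - s).choose (N - n) := by
  have hT (T : Finset (Fin N)) :
      walsh S T = ∑ A ∈ S.powerset, if A ⊆ T then (-2 : ℝ) ^ #A else 0 := by
    rw [walsh_eq_sum_powerset, ← sum_filter]
    congr 1
    ext A
    simp only [mem_filter, mem_powerset, subset_inter_iff]
  have hA (A : Finset (Fin N)) : ∑ T ∈ powersetCard n univ, (if A ⊆ T then (-2 : ℝ) ^ #A else 0) =
      (-2) ^ #A * (N - #A).choose (N - n) := by
    rw [← sum_filter, sum_const, card_filter_superset_powersetCard hn, nsmul_eq_mul, mul_comm]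
  rw [sphereSum, sum_congr rfl fun T _ => hT T, sum_comm, sum_congr rfl fun A _ => hA A,
    sum_powerset_apply_card (fun m => (-2 : ℝ) ^ m * (N - m).choose (N - n)),
    ← sum_subset (range_subset_range.2 (by simpa using card_le_univ S : #S + 1 ≤ N + 1))]
  · exact sum_congr rfl fun s _ => by rw [nsmul_eq_mul, mul_assoc]
  · intro s _ hs
    rw [Nat.choose_eq_zero_of_lt (by simpa using hs)]
    simp

lemma sphereSum_eq_choose_mul_kraw {n : ℕ} (hn : n ≤ N) (S : Finset (Fin N)) :
    sphereSum n S = N.choose n * kraw N n #S := by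
  rw [sphereSum_eq_sum hn, choose_mul_kraw hn]

lemma sum_walsh_mul_sphereSum_mul_sphereSum (U : Finset (Fin N)) (k j : ℕ) :
    ∑ S, walsh S U * (sphereSum k S * sphereSum j S) =
      2 ^ N * ∑ A ∈ powersetCard k univ, if #(A ∆ U) = j then 1 else 0 := by
  have hexp (S : Finset (Fin N)) : walsh S U * (sphereSum k S * sphereSum j S) =
      ∑ A ∈ powersetCard k univ, ∑ B ∈ powersetCard j univ, walsh S (U ∆ A ∆ B) := by
    rw [sphereSum, sphereSum, sum_mul_sum, mul_sum]
    refine sum_congr rfl fun A _ => ?_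
    rw [mul_sum]
    refine sum_congr rfl fun B _ => ?_
    rw [← mul_assoc, walsh_mul_walsh, walsh_mul_walsh]
  have hB (A : Finset (Fin N)) : ∑ B ∈ powersetCard j univ, ∑ S, walsh S (U ∆ A ∆ B) =
      if #(A ∆ U) = j then 2 ^ N else 0 := by
    simp only [sum_walsh, symmDiff_eq_empty, sum_ite_eq, mem_powersetCard, subset_univ, true_and,
      symmDiff_comm U A]
  simp only [hexp]
  rw [sum_comm, mul_sum]
  refine sum_congr rfl fun A _ => ?_
  rw [sum_comm, hB, mul_ite, mul_one, mul_zero]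

lemma sum_sphereSum_mul_sphereSum (k j : ℕ) :
    ∑ S : Finset (Fin N), sphereSum k S * sphereSum j S =
      if k = j then 2 ^ N * (N.choose k : ℝ) else 0 := by
  have h := sum_walsh_mul_sphereSum_mul_sphereSum (∅ : Finset (Fin N)) k j
  simp only [walsh, inter_empty, card_empty, pow_zero, one_mul] at h
  simp only [← bot_eq_empty, symmDiff_bot] at h
  rw [h, sum_congr rfl fun A hA => by rw [(mem_powersetCard.1 hA).2], sum_const,
    card_powersetCard, card_univ, Fintype.card_fin, nsmul_eq_mul]
  split_ifs <;> ring

lemma sum_sq_mul_sphereSum_mul_sphereSum (k j : ℕ) :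
    ∑ S : Finset (Fin N), ((N : ℝ) - 2 * #S) ^ 2 * (sphereSum k S * sphereSum j S) =
      2 ^ N * N.choose k * ((k : ℝ) * (k - 1) * (if k - 2 = j then 1 else 0) +
        (2 * k * (N - k) + N) * (if k = j then 1 else 0) +
        (N - k) * (N - k - 1) * (if k + 2 = j then 1 else 0)) := by
  -- `(N - 2|S|)² = ∑_{e,f} walsh S ({e} ∆ {f})`: the sum counts pairs of flips taking a
  -- `k`-set to a `j`-set.
  have hsq (S : Finset (Fin N)) : ((N : ℝ) - 2 * #S) ^ 2 = ∑ e, ∑ f, walsh S ({e} ∆ {f}) := by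
    rw [← sum_walsh_singleton, sq, sum_mul_sum]
    simp only [walsh_mul_walsh]
  simp only [hsq, sum_mul]
  rw [sum_comm]
  simp only [sum_comm (s := (univ : Finset (Finset (Fin N)))),
    sum_walsh_mul_sphereSum_mul_sphereSum, ← mul_sum]
  rw [sum_congr rfl fun e _ => sum_comm, sum_comm]
  simp only [← symmDiff_assoc]
  rw [sum_congr rfl fun A hA => by
    rw [sum_sum_card_symmDiff_singleton A (fun m => if m = j then 1 else 0),
      (mem_powersetCard.1 hA).2],
    sum_const, card_powersetCard, card_univ, Fintype.card_fin, nsmul_eq_mul]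
  ring

lemma sum_weight_mul_sphereSum_mul_sphereSum {k j : ℕ} (hk : k ≤ N) (hj : j ≤ N) (w : ℕ → ℝ) :
    ∑ S : Finset (Fin N), w #S * (sphereSum k S * sphereSum j S) =
      N.choose k * N.choose j *
        ∑ i ∈ range (N + 1), N.choose i * w i * kraw N i k * kraw N j i := by
  simp only [sphereSum_eq_choose_mul_kraw hk, sphereSum_eq_choose_mul_kraw hj]
  rw [← sum_range_choose_mul fun i => w i * (N.choose k * kraw N k i * (N.choose j * kraw N j i)),
    mul_sum]
  refine sum_congr rfl fun i hi => ?_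
  rw [kraw_symm (Nat.lt_succ_iff.1 (mem_range.1 hi)) hk]
  ring

lemma sum_quadraticWeight_mul_sphereSum_mul_sphereSum {k j : ℕ} (hk : k ≤ N) (hj : j ≤ N)
    (ν : ℝ) :
    ∑ S : Finset (Fin N), (ν + N - #S) * (ν + #S) * (sphereSum k S * sphereSum j S) =
      2 ^ N * N.choose j *
        (if j = k + 2 then -((k : ℝ) + 1) * ((k : ℝ) + 2) / 4
        else if j = k then N / 2 * (N / 2 - 1/2) + (k : ℝ) * ((k : ℝ)/2 - N / 2) + ν * (ν + N)
        else if j + 2 = k then -((N : ℝ) - (k : ℝ) + 1) * ((N : ℝ) - (k : ℝ) + 2) / 4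
        else 0) := by
  have hw (S : Finset (Fin N)) : (ν + N - #S) * (ν + #S) * (sphereSum k S * sphereSum j S) =
      (ν * (ν + N) + N ^ 2 / 4) * (sphereSum k S * sphereSum j S) -
        ((N : ℝ) - 2 * #S) ^ 2 * (sphereSum k S * sphereSum j S) / 4 := by ring
  simp only [hw, sum_sub_distrib, ← mul_sum, ← sum_div, sum_sphereSum_mul_sphereSum,
    sum_sq_mul_sphereSum_mul_sphereSum]
  rcases (show j = k + 2 ∨ j = k ∨ j + 2 = k ∨ (j ≠ k + 2 ∧ j ≠ k ∧ j + 2 ≠ k) by omega) with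
    rfl | rfl | rfl | ⟨h1, h2, h3⟩
  · simp only [show k - 2 ≠ k + 2 by omega, show k ≠ k + 2 by omega, if_true, if_false]
    linear_combination (2 ^ N / 4 : ℝ) * choose_add_two_mul hj
  · have hdown : (j : ℝ) * (j - 1) * (if j - 2 = j then 1 else 0) = 0 := by
      split_ifs with h
      · obtain rfl : j = 0 := by omega
        simp
      · ring
    simp only [show j + 2 ≠ j by omega, show j ≠ j + 2 by omega, if_true, if_false] at hdown ⊢
    linear_combination (-2 ^ N * N.choose j / 4 : ℝ) * hdown
  · simp only [show j + 2 ≠ j by omega, show j ≠ j + 2 by omega, show j ≠ j + 2 + 2 by omega,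
      show j + 2 + 2 ≠ j by omega, Nat.add_sub_cancel, if_true, if_false]
    push_cast
    linear_combination (-2 ^ N / 4 : ℝ) * choose_add_two_mul hk
  · have hdown : (k : ℝ) * (k - 1) * (if k - 2 = j then 1 else 0) = 0 := by
      split_ifs with h
      · obtain rfl : k = 1 := by omega
        simp
      · ring
    simp only [h1, h2, h3, Ne.symm h2, show k + 2 ≠ j by omega, if_false]
    linear_combination (-2 ^ N * N.choose k / 4 : ℝ) * hdown

end Krawtchouk

theorem stmt14_general (N : ℕ) (ℓ : ℝ) (hℓ : ℓ = (N : ℝ) / 2) (ν : ℝ) :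
    ∀ k j : ℕ, k ≤ N → j ≤ N →
      ((2 : ℝ) ^ N)⁻¹ * (N.choose k : ℝ) *
        (∑ i ∈ Finset.range (N + 1),
          (N.choose i : ℝ) * ((ν + (N : ℝ) - (i : ℝ)) * (ν + (i : ℝ)))
            * kraw N i (k : ℝ) * kraw N j (i : ℝ))
      = if j = k + 2 then -((k : ℝ) + 1) * ((k : ℝ) + 2) / 4
        else if j = k then ℓ * (ℓ - 1/2) + (k : ℝ) * ((k : ℝ)/2 - ℓ) + ν * (ν + (N : ℝ))
        else if j + 2 = k then -((N : ℝ) - (k : ℝ) + 1) * ((N : ℝ) - (k : ℝ) + 2) / 4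
        else 0 := by
  intro k j hk hj
  subst hℓ
  have h := Krawtchouk.sum_weight_mul_sphereSum_mul_sphereSum hk hj fun i => (ν + N - i) * (ν + i)
  beta_reduce at h
  rw [Krawtchouk.sum_quadraticWeight_mul_sphereSum_mul_sphereSum hk hj] at h
  have hCj : (N.choose j : ℝ) ≠ 0 := by exact_mod_cast (Nat.choose_pos hj).ne'
  apply mul_left_cancel₀ (mul_ne_zero (pow_ne_zero N two_ne_zero) hCj)
  rw [h]
  field_simp

/-- the entries of the constant matrix
`Δ_{k,j} = 2^{−N} C(N,k) Σ_i C(N,i)(ν+N−i)(ν+i) K_i(k) K_j(i)` (up to the factor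
`ν(ν+N)`) are pentadiagonal, given explicitly by the stated case distinction. -/
theorem stmt14 (N : ℕ) (ℓ : ℝ) (hℓ : ℓ = (N : ℝ) / 2) (ν : ℝ) (hν : 0 < ν) :
    ∀ k j : ℕ, k ≤ N → j ≤ N →
      ((2 : ℝ) ^ N)⁻¹ * (N.choose k : ℝ) *
        (∑ i ∈ Finset.range (N + 1),
          (N.choose i : ℝ) * ((ν + (N : ℝ) - (i : ℝ)) * (ν + (i : ℝ)))
            * kraw N i (k : ℝ) * kraw N j (i : ℝ))
      = if j = k + 2 then -((k : ℝ) + 1) * ((k : ℝ) + 2) / 4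
        else if j = k then ℓ * (ℓ - 1/2) + (k : ℝ) * ((k : ℝ)/2 - ℓ) + ν * (ν + (N : ℝ))
        else if j + 2 = k then -((N : ℝ) - (k : ℝ) + 1) * ((N : ℝ) - (k : ℝ) + 2) / 4
        else 0 :=
  stmt14_general N ℓ hℓ ν
end

section
/- Let n ≥ 3 be an integer and κ ≥ 0. For y ∈ (0,1) define the 2×2 matrices Ψ₀(y) := [[√y, 1], [√y, (y(n−1)−1)/(n−2)]], U := [[2n+1, 0], [−1, 2n+2]], and F(y) := [[(4y²n + 4yn − y² − 18y + 3)/(4y(y−1)), −2√y/(y−1)], [−2√y(n−2)/(y−1), 2y/(y−1)]], and set F^{(κ)}(y) := F(y) − κ Ψ₀(y)^{−1}(U + (κ−1)I)Ψ₀(y) − κ(1−2y)Ψ₀(y)^{−1}Ψ₀'(y). Then the diagonal matrix T^{(κ)} := diag(1, 2(n−2)/(κ+2)) satisfies T^{(κ)}(F^{(κ)}(y))^{*} = F^{(κ)}(y)T^{(κ)} for all y ∈ (0,1); moreover, T^{(κ)} is the unique diagonal 2×2 matrix T with T_{0,0} = 1 satisfying T(F^{(κ)}(y))^{*} = F^{(κ)}(y)T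 for all y ∈ (0,1). -/
/-!
The conjugations in `F^{(κ)}` are explicit: `(U + (κ-1)I) Ψ₀ = Ψ₀ K` and `Ψ₀' = Ψ₀ L` with `K`, `L`
upper triangular, so `F^{(κ)}(y)` is a matrix with real entries in closed form. For a real `2 × 2`
matrix `A` and `T = diag(1, t)`, the relation `T A^* = A T` reduces to `A₁₀ = A₀₁ t`; here
`A₀₁ = -√y (κ + 2)/(y - 1)` does not vanish on `(0,1)`, which forces `t = A₁₀/A₀₁ = 2(n-2)/(κ+2)`.
-/

open Matrix Set

noncomputable def mderiv (Q : ℝ → Matrix (Fin 2) (Fin 2) ℂ) :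
    ℝ → Matrix (Fin 2) (Fin 2) ℂ :=
  fun y => Matrix.of fun i j => deriv (fun t => Q t i j) y

theorem Matrix.IsDiag.eq_fin_two {α : Type*} [Zero α] {T : Matrix (Fin 2) (Fin 2) α}
    (h : T.IsDiag) : T = !![T 0 0, 0; 0, T 1 1] := by
  conv_lhs => rw [T.eta_fin_two, h (by decide : (0 : Fin 2) ≠ 1), h (by decide : (1 : Fin 2) ≠ 0)]

theorem diag_mul_conjTranspose_map_ofReal_eq_iff (M : Matrix (Fin 2) (Fin 2) ℝ) (t : ℂ) :
    !![1, 0; 0, t] * (M.map (↑))ᴴ = M.map (↑) * !![1, 0; 0, t] ↔ (M 1 0 : ℂ) = M 0 1 * t := by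
  simp only [← Matrix.ext_iff, Fin.forall_fin_two, Matrix.mul_apply, Fin.sum_univ_two]
  simp [mul_comm, eq_comm]

section

variable {n : ℕ} {y : ℝ}

lemma ofReal_sqrt_sq (hy : 0 ≤ y) : (Real.sqrt y : ℂ) ^ 2 = y := by
  exact_mod_cast Real.sq_sqrt hy

lemma hasDerivAt_ofReal_sqrt (hy : 0 < y) :
    HasDerivAt (fun t : ℝ => (Real.sqrt t : ℂ)) (1 / (2 * Real.sqrt y)) y := by
  simpa using (Real.hasDerivAt_sqrt hy.ne').ofReal_comp

noncomputable def psi0 (n : ℕ) (y : ℝ) : Matrix (Fin 2) (Fin 2) ℂ :=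
  !![(Real.sqrt y : ℂ), 1;
     (Real.sqrt y : ℂ), ((y : ℂ) * ((n : ℂ) - 1) - 1) / ((n : ℂ) - 2)]

lemma isUnit_det_psi0 (hn : 3 ≤ n) (hy : y ∈ Ioo 0 1) : IsUnit (psi0 n y).det := by
  have hs : (Real.sqrt y : ℂ) ≠ 0 := by exact_mod_cast (Real.sqrt_pos.2 hy.1).ne'
  have hn2 : (n : ℂ) - 2 ≠ 0 := sub_ne_zero.2 (by norm_cast; omega)
  have hn1 : (n : ℂ) - 1 ≠ 0 := sub_ne_zero.2 (by norm_cast; omega)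
  have hy1 : (y : ℂ) - 1 ≠ 0 := sub_ne_zero.2 (by exact_mod_cast hy.2.ne)
  have hdet : (psi0 n y).det = Real.sqrt y * ((n : ℂ) - 1) * ((y : ℂ) - 1) / ((n : ℂ) - 2) := by
    rw [psi0, det_fin_two_of]
    field_simp
    ring
  rw [hdet, isUnit_iff_ne_zero]
  exact div_ne_zero (mul_ne_zero (mul_ne_zero hs hn1) hy1) hn2

lemma mul_psi0 (hn : n ≠ 2) (hy : 0 < y) (κ : ℂ) :
    (!![2 * (n : ℂ) + 1, 0; -1, 2 * (n : ℂ) + 2] + (κ - 1) • (1 : Matrix (Fin 2) (Fin 2) ℂ))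
      * psi0 n y = psi0 n y * !![2 * (n : ℂ) + κ, -(1 / Real.sqrt y); 0, 2 * (n : ℂ) + κ + 1] := by
  have hs : (Real.sqrt y : ℂ) ≠ 0 := by exact_mod_cast (Real.sqrt_pos.2 hy).ne'
  have hn2 : (n : ℂ) - 2 ≠ 0 := sub_ne_zero.2 (by exact_mod_cast hn)
  rw [psi0, ← ofReal_sqrt_sq hy.le]
  ext i j
  fin_cases i <;> fin_cases j <;> simp [Matrix.mul_apply, Fin.sum_univ_two] <;> field_simp <;> ring

lemma mderiv_psi0 (hn : n ≠ 2) (hy : y ∈ Ioo 0 1) :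
    mderiv (psi0 n) y = psi0 n y *
      !![1 / (2 * (y : ℂ)), -(1 / (Real.sqrt y * ((y : ℂ) - 1))); 0, 1 / ((y : ℂ) - 1)] := by
  have hs : (Real.sqrt y : ℂ) ≠ 0 := by exact_mod_cast (Real.sqrt_pos.2 hy.1).ne'
  have hn2 : (n : ℂ) - 2 ≠ 0 := sub_ne_zero.2 (by exact_mod_cast hn)
  have hy1 : (y : ℂ) - 1 ≠ 0 := sub_ne_zero.2 (by exact_mod_cast hy.2.ne)
  have hderiv₁₁ : HasDerivAt (fun t : ℝ => ((t : ℂ) * ((n : ℂ) - 1) - 1) / ((n : ℂ) - 2))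
      (((n : ℂ) - 1) / ((n : ℂ) - 2)) y := by
    simpa using (((hasDerivAt_id y).ofReal_comp.mul_const ((n : ℂ) - 1)).sub_const 1).div_const
      ((n : ℂ) - 2)
  ext i j
  fin_cases i <;> fin_cases j <;> simp [mderiv, psi0, Matrix.mul_apply, Fin.sum_univ_two,
    (hasDerivAt_ofReal_sqrt hy.1).deriv, hderiv₁₁.deriv]
  all_goals rw [← ofReal_sqrt_sq hy.1.le] at hy1 ⊢; field_simp
  all_goals ring

noncomputable def fMat (n : ℕ) (y : ℝ) : Matrix (Fin 2) (Fin 2) ℂ :=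
  !![(4 * (y : ℂ) ^ 2 * (n : ℂ) + 4 * (y : ℂ) * (n : ℂ) - (y : ℂ) ^ 2 - 18 * (y : ℂ) + 3)
        / (4 * (y : ℂ) * ((y : ℂ) - 1)),
     -(2 * (Real.sqrt y : ℂ)) / ((y : ℂ) - 1);
     -(2 * (Real.sqrt y : ℂ) * ((n : ℂ) - 2)) / ((y : ℂ) - 1),
     2 * (y : ℂ) / ((y : ℂ) - 1)]

noncomputable def fKappa (n : ℕ) (κ y : ℝ) : Matrix (Fin 2) (Fin 2) ℂ :=
  fMat n y
    - (κ : ℂ) • ((psi0 n y)⁻¹ * (!![2 * (n : ℂ) + 1, 0; -1, 2 * (n : ℂ) + 2]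
        + ((κ : ℂ) - 1) • (1 : Matrix (Fin 2) (Fin 2) ℂ)) * psi0 n y)
    - ((κ : ℂ) * (1 - 2 * (y : ℂ))) • ((psi0 n y)⁻¹ * mderiv (psi0 n) y)

noncomputable def fKappaReal (n : ℕ) (κ y : ℝ) : Matrix (Fin 2) (Fin 2) ℝ :=
  !![(4 * y ^ 2 * n + 4 * y * n - y ^ 2 - 18 * y + 3) / (4 * y * (y - 1))
        - κ * (2 * n + κ) - κ * (1 - 2 * y) / (2 * y),
     -(Real.sqrt y * (κ + 2)) / (y - 1);
     -(2 * Real.sqrt y * (n - 2)) / (y - 1),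
     2 * y / (y - 1) - κ * (2 * n + κ + 1) - κ * (1 - 2 * y) / (y - 1)]

lemma fKappa_eq_map_ofReal (hn : 3 ≤ n) (κ : ℝ) (hy : y ∈ Ioo 0 1) :
    fKappa n κ y = (fKappaReal n κ y).map (↑) := by
  have hdet := isUnit_det_psi0 hn hy
  have hn2 : n ≠ 2 := by omega
  have hs : (Real.sqrt y : ℂ) ≠ 0 := by exact_mod_cast (Real.sqrt_pos.2 hy.1).ne'
  have hy0 : (y : ℂ) ≠ 0 := by exact_mod_cast hy.1.ne'
  have hy1 : (y : ℂ) - 1 ≠ 0 := sub_ne_zero.2 (by exact_mod_cast hy.2.ne)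
  rw [fKappa, Matrix.mul_assoc, mul_psi0 hn2 hy.1, nonsing_inv_mul_cancel_left _ _ hdet,
    mderiv_psi0 hn2 hy, nonsing_inv_mul_cancel_left _ _ hdet, fMat, fKappaReal]
  ext i j
  fin_cases i <;> fin_cases j <;> simp
  all_goals rw [← ofReal_sqrt_sq hy.1.le] at hy0 hy1 ⊢; field_simp
  all_goals ring

lemma fKappaReal_one_zero {κ : ℝ} (hκ : κ + 2 ≠ 0) :
    fKappaReal n κ y 1 0 = fKappaReal n κ y 0 1 * (2 * (n - 2) / (κ + 2)) := by
  simp only [fKappaReal, of_apply, cons_val', cons_val_zero, cons_val_one, empty_val',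
    cons_val_fin_one]
  field_simp

lemma fKappaReal_zero_one_ne_zero {κ : ℝ} (hκ : κ + 2 ≠ 0) (hy : y ∈ Ioo 0 1) :
    fKappaReal n κ y 0 1 ≠ 0 := by
  have hs : Real.sqrt y ≠ 0 := (Real.sqrt_pos.2 hy.1).ne'
  have hy1 : y - 1 ≠ 0 := sub_ne_zero.2 hy.2.ne
  simp [fKappaReal, hs, hκ, hy1]

end

/-- case c1, associated to `(Sp(2n), Sp(2n−2)×Sp(2))`: the diagonal
matrix `T^{(κ)} = diag(1, 2(n−2)/(κ+2))` is the unique diagonal matrix `T` with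
`T_{0,0} = 1` satisfying `T(F^{(κ)}(y))^* = F^{(κ)}(y)T` on `(0,1)`. -/
theorem stmt17 (n : ℕ) (hn : 3 ≤ n) (κ : ℝ) (hκ : 0 ≤ κ)
    (Ψ₀ : ℝ → Matrix (Fin 2) (Fin 2) ℂ)
    (hΨ₀ : ∀ y : ℝ, Ψ₀ y =
      !![(Real.sqrt y : ℂ), 1;
         (Real.sqrt y : ℂ), ((y : ℂ) * ((n : ℂ) - 1) - 1) / ((n : ℂ) - 2)])
    (U : Matrix (Fin 2) (Fin 2) ℂ)
    (hU : U = !![2 * (n : ℂ) + 1, 0; -1, 2 * (n : ℂ) + 2])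
    (F : ℝ → Matrix (Fin 2) (Fin 2) ℂ)
    (hF : ∀ y : ℝ, F y =
      !![(4 * (y : ℂ) ^ 2 * (n : ℂ) + 4 * (y : ℂ) * (n : ℂ) - (y : ℂ) ^ 2 - 18 * (y : ℂ) + 3)
            / (4 * (y : ℂ) * ((y : ℂ) - 1)),
         -(2 * (Real.sqrt y : ℂ)) / ((y : ℂ) - 1);
         -(2 * (Real.sqrt y : ℂ) * ((n : ℂ) - 2)) / ((y : ℂ) - 1),
         2 * (y : ℂ) / ((y : ℂ) - 1)])
    (Fκ : ℝ → Matrix (Fin 2) (Fin 2) ℂ)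
    (hFκ : ∀ y : ℝ, Fκ y = F y
      - (κ : ℂ) • ((Ψ₀ y)⁻¹ * (U + ((κ : ℂ) - 1) • (1 : Matrix (Fin 2) (Fin 2) ℂ)) * Ψ₀ y)
      - ((κ : ℂ) * (1 - 2 * (y : ℂ))) • ((Ψ₀ y)⁻¹ * mderiv Ψ₀ y)) :
    (∀ y ∈ Set.Ioo (0:ℝ) 1,
      !![1, 0; 0, 2 * ((n : ℂ) - 2) / ((κ : ℂ) + 2)] * (Fκ y)ᴴ
        = Fκ y * !![1, 0; 0, 2 * ((n : ℂ) - 2) / ((κ : ℂ) + 2)])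
    ∧ ∀ T : Matrix (Fin 2) (Fin 2) ℂ, T.IsDiag → T 0 0 = 1 →
        (∀ y ∈ Set.Ioo (0:ℝ) 1, T * (Fκ y)ᴴ = Fκ y * T) →
        T = !![1, 0; 0, 2 * ((n : ℂ) - 2) / ((κ : ℂ) + 2)] := by
  obtain rfl : Ψ₀ = psi0 n := funext hΨ₀
  subst hU
  obtain rfl : F = fMat n := funext hF
  obtain rfl : Fκ = fKappa n κ := funext hFκ
  have hκ2 : κ + 2 ≠ 0 := by linarith
  have hrel (y : ℝ) : (fKappaReal n κ y 1 0 : ℂ) =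
      fKappaReal n κ y 0 1 * (2 * ((n : ℂ) - 2) / ((κ : ℂ) + 2)) := by
    exact_mod_cast fKappaReal_one_zero hκ2
  refine ⟨fun y hy => ?_, fun T hT hT00 hsym => ?_⟩
  · rw [fKappa_eq_map_ofReal hn κ hy, diag_mul_conjTranspose_map_ofReal_eq_iff]
    exact hrel y
  · have half : (1 / 2 : ℝ) ∈ Ioo 0 1 := by norm_num
    have h := hsym _ half
    rw [hT.eq_fin_two, hT00, fKappa_eq_map_ofReal hn κ half,
      diag_mul_conjTranspose_map_ofReal_eq_iff, hrel] at h
    rw [hT.eq_fin_two, hT00,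
      mul_left_cancel₀ (by exact_mod_cast fKappaReal_zero_one_ne_zero hκ2 half) h]
end
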